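/- arXiv:1102.5630 — 8 statements merged into one kernel-verified Lean document; each statement's English description precedes it below -/
import Mathlib

section
/- For positive integers a, b and n > 0, the sequence L_n(a,b) satisfies the linear recurrence L_n = L_{n-1} + L_{n-a} + L_{n-b} + L_{n-a-b-1} - L_{n-a-1} - L_{n-b-1} - L_{n-a-b}, where L_0(a,b)=1 and L_m(a,b):=0 for m<0. -/
/-- `L a b n` is the number of pairs `(k, l)` of nonnegative integers with `a*k + b*l ≤ n`. -/
def L (a b n : ℕ) : ℕ :=
  ((Finset.range (n + 1) ×ˢ Finset.range (n + 1)).filter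
    (fun p => a * p.1 + b * p.2 ≤ n)).card

/-- Extension of `L a b` to integer indices, vanishing for negative indices. -/
def LZ (a b : ℕ) (n : ℤ) : ℤ :=
  if 0 ≤ n then (L a b n.toNat : ℤ) else 0

open Finset

private def Sol (a b m : ℕ) : Finset (ℕ × ℕ) :=
  (Finset.range (m + 1) ×ˢ Finset.range (m + 1)).filter (fun p => a * p.1 + b * p.2 ≤ m)

private lemma L_eq_sol (a b m : ℕ) : L a b m = (Sol a b m).card := rfl

private lemma mem_sol (a b m : ℕ) (p : ℕ × ℕ) :
    p ∈ Sol a b m ↔ p.1 ≤ m ∧ p.2 ≤ m ∧ a * p.1 + b * p.2 ≤ m := by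
  simp [Sol, Finset.mem_filter, Finset.mem_product, Nat.lt_succ_iff, and_assoc]

private lemma shiftA (a b m : ℕ) (ha : 0 < a) (hb : 0 < b) (h : a ≤ m) :
    ((Sol a b m).filter (fun p => 1 ≤ p.1)).card = L a b (m - a) := by
  rw [L_eq_sol]
  apply Finset.card_nbij' (fun p => (p.1 - 1, p.2)) (fun p => (p.1 + 1, p.2))
  · rintro ⟨k, l⟩ hp
    rw [Finset.mem_coe, Finset.mem_filter, mem_sol] at hp
    dsimp only at hp
    obtain ⟨⟨hk, hl, hs⟩, hk1⟩ := hp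
    obtain ⟨j, rfl⟩ : ∃ j, k = j + 1 := ⟨k - 1, by omega⟩
    rw [Finset.mem_coe, mem_sol]
    have e : a * (j + 1) = a * j + a := by ring
    have h1 : j ≤ a * j := Nat.le_mul_of_pos_left j ha
    have h2 : l ≤ b * l := Nat.le_mul_of_pos_left l hb
    dsimp only
    try simp only [Nat.add_sub_cancel]
    omega
  · rintro ⟨k, l⟩ hp
    rw [Finset.mem_coe, mem_sol] at hp
    dsimp only at hp
    obtain ⟨hk, hl, hs⟩ := hp
    rw [Finset.mem_coe, Finset.mem_filter, mem_sol]
    have e : a * (k + 1) = a * k + a := by ring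
    have h1 : k ≤ a * k := Nat.le_mul_of_pos_left k ha
    have h2 : l ≤ b * l := Nat.le_mul_of_pos_left l hb
    dsimp only
    try simp only [Nat.add_sub_cancel]
    omega
  · rintro ⟨k, l⟩ hp
    rw [Finset.mem_coe, Finset.mem_filter] at hp
    have : 1 ≤ k := hp.2
    dsimp only
    simp only [Prod.mk.injEq, and_true, true_and]
    omega
  · rintro ⟨k, l⟩ _
    simp

private lemma shiftB (a b m : ℕ) (ha : 0 < a) (hb : 0 < b) (h : b ≤ m) :
    ((Sol a b m).filter (fun p => 1 ≤ p.2)).card = L a b (m - b) := by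
  rw [L_eq_sol]
  apply Finset.card_nbij' (fun p => (p.1, p.2 - 1)) (fun p => (p.1, p.2 + 1))
  · rintro ⟨k, l⟩ hp
    rw [Finset.mem_coe, Finset.mem_filter, mem_sol] at hp
    dsimp only at hp
    obtain ⟨⟨hk, hl, hs⟩, hl1⟩ := hp
    obtain ⟨j, rfl⟩ : ∃ j, l = j + 1 := ⟨l - 1, by omega⟩
    rw [Finset.mem_coe, mem_sol]
    have e : b * (j + 1) = b * j + b := by ring
    have h1 : j ≤ b * j := Nat.le_mul_of_pos_left j hb
    have h2 : k ≤ a * k := Nat.le_mul_of_pos_left k ha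
    dsimp only
    try simp only [Nat.add_sub_cancel]
    omega
  · rintro ⟨k, l⟩ hp
    rw [Finset.mem_coe, mem_sol] at hp
    dsimp only at hp
    obtain ⟨hk, hl, hs⟩ := hp
    rw [Finset.mem_coe, Finset.mem_filter, mem_sol]
    have e : b * (l + 1) = b * l + b := by ring
    have h1 : l ≤ b * l := Nat.le_mul_of_pos_left l hb
    have h2 : k ≤ a * k := Nat.le_mul_of_pos_left k ha
    dsimp only
    try simp only [Nat.add_sub_cancel]
    omega
  · rintro ⟨k, l⟩ hp
    rw [Finset.mem_coe, Finset.mem_filter] at hp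
    have : 1 ≤ l := hp.2
    dsimp only
    simp only [Prod.mk.injEq, and_true, true_and]
    omega
  · rintro ⟨k, l⟩ _
    simp

private lemma shiftAB (a b m : ℕ) (ha : 0 < a) (hb : 0 < b) (h : a + b ≤ m) :
    ((Sol a b m).filter (fun p => 1 ≤ p.1 ∧ 1 ≤ p.2)).card = L a b (m - (a + b)) := by
  rw [L_eq_sol]
  apply Finset.card_nbij' (fun p => (p.1 - 1, p.2 - 1)) (fun p => (p.1 + 1, p.2 + 1))
  · rintro ⟨k, l⟩ hp
    rw [Finset.mem_coe, Finset.mem_filter, mem_sol] at hp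
    dsimp only at hp
    obtain ⟨⟨hk, hl, hs⟩, hk1, hl1⟩ := hp
    obtain ⟨j, rfl⟩ : ∃ j, k = j + 1 := ⟨k - 1, by omega⟩
    obtain ⟨i, rfl⟩ : ∃ i, l = i + 1 := ⟨l - 1, by omega⟩
    rw [Finset.mem_coe, mem_sol]
    have e1 : a * (j + 1) = a * j + a := by ring
    have e2 : b * (i + 1) = b * i + b := by ring
    have h1 : j ≤ a * j := Nat.le_mul_of_pos_left j ha
    have h2 : i ≤ b * i := Nat.le_mul_of_pos_left i hb
    dsimp only
    try simp only [Nat.add_sub_cancel]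
    omega
  · rintro ⟨k, l⟩ hp
    rw [Finset.mem_coe, mem_sol] at hp
    dsimp only at hp
    obtain ⟨hk, hl, hs⟩ := hp
    rw [Finset.mem_coe, Finset.mem_filter, mem_sol]
    have e1 : a * (k + 1) = a * k + a := by ring
    have e2 : b * (l + 1) = b * l + b := by ring
    have h1 : k ≤ a * k := Nat.le_mul_of_pos_left k ha
    have h2 : l ≤ b * l := Nat.le_mul_of_pos_left l hb
    dsimp only
    try simp only [Nat.add_sub_cancel]
    omega
  · rintro ⟨k, l⟩ hp
    rw [Finset.mem_coe, Finset.mem_filter] at hp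
    obtain ⟨-, hk1, hl1⟩ := hp
    dsimp only
    simp only [Prod.mk.injEq, and_true, true_and]
    omega
  · rintro ⟨k, l⟩ _
    simp

private lemma emptyA (a b m : ℕ) (h : ¬ a ≤ m) :
    ((Sol a b m).filter (fun p => 1 ≤ p.1)).card = 0 := by
  rw [Finset.card_eq_zero, Finset.filter_eq_empty_iff]
  rintro ⟨k, l⟩ hp
  rw [mem_sol] at hp
  dsimp only at hp
  obtain ⟨hk, hl, hs⟩ := hp
  intro hk1
  have h1 : a ≤ a * k := Nat.le_mul_of_pos_right a hk1
  omega

private lemma emptyB (a b m : ℕ) (h : ¬ b ≤ m) :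
    ((Sol a b m).filter (fun p => 1 ≤ p.2)).card = 0 := by
  rw [Finset.card_eq_zero, Finset.filter_eq_empty_iff]
  rintro ⟨k, l⟩ hp
  rw [mem_sol] at hp
  dsimp only at hp
  obtain ⟨hk, hl, hs⟩ := hp
  intro hl1
  have h1 : b ≤ b * l := Nat.le_mul_of_pos_right b hl1
  omega

private lemma emptyAB (a b m : ℕ) (h : ¬ a + b ≤ m) :
    ((Sol a b m).filter (fun p => 1 ≤ p.1 ∧ 1 ≤ p.2)).card = 0 := by
  rw [Finset.card_eq_zero, Finset.filter_eq_empty_iff]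
  rintro ⟨k, l⟩ hp
  rw [mem_sol] at hp
  dsimp only at hp
  obtain ⟨hk, hl, hs⟩ := hp
  rintro ⟨hk1, hl1⟩
  have h1 : a ≤ a * k := Nat.le_mul_of_pos_right a hk1
  have h2 : b ≤ b * l := Nat.le_mul_of_pos_right b hl1
  omega

private lemma card_split (a b m : ℕ) :
    (Sol a b m).card = ((Sol a b m).filter (fun p => 1 ≤ p.1 ∨ 1 ≤ p.2)).card + 1 := by
  have h := Finset.card_filter_add_card_filter_not
    (s := Sol a b m) (p := fun p => 1 ≤ p.1 ∨ 1 ≤ p.2)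
  have h2 : (Sol a b m).filter (fun p => ¬(1 ≤ p.1 ∨ 1 ≤ p.2)) = {(0, 0)} := by
    ext ⟨k, l⟩
    rw [Finset.mem_filter, mem_sol, Finset.mem_singleton]
    constructor
    · rintro ⟨-, hn⟩
      simp only [not_or] at hn
      have : k = 0 ∧ l = 0 := by omega
      simp [Prod.ext_iff, this.1, this.2]
    · rintro h
      rw [Prod.ext_iff] at h
      obtain ⟨rfl, rfl⟩ := h
      simp
  rw [h2, Finset.card_singleton] at h
  omega

private lemma incl_excl (a b m : ℕ) :
    ((Sol a b m).filter (fun p => 1 ≤ p.1 ∨ 1 ≤ p.2)).card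
      + ((Sol a b m).filter (fun p => 1 ≤ p.1 ∧ 1 ≤ p.2)).card
    = ((Sol a b m).filter (fun p => 1 ≤ p.1)).card
      + ((Sol a b m).filter (fun p => 1 ≤ p.2)).card := by
  rw [Finset.filter_or, Finset.filter_and]
  exact Finset.card_union_add_card_inter _ _

private lemma key_nat (a b m : ℕ) (ha : 0 < a) (hb : 0 < b) :
    L a b m + (if a + b ≤ m then L a b (m - (a + b)) else 0)
      = (if a ≤ m then L a b (m - a) else 0) + (if b ≤ m then L a b (m - b) else 0) + 1 := by
  have hA : ((Sol a b m).filter (fun p => 1 ≤ p.1)).card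
      = (if a ≤ m then L a b (m - a) else 0) := by
    split_ifs with h
    · exact shiftA a b m ha hb h
    · exact emptyA a b m h
  have hB : ((Sol a b m).filter (fun p => 1 ≤ p.2)).card
      = (if b ≤ m then L a b (m - b) else 0) := by
    split_ifs with h
    · exact shiftB a b m ha hb h
    · exact emptyB a b m h
  have hAB : ((Sol a b m).filter (fun p => 1 ≤ p.1 ∧ 1 ≤ p.2)).card
      = (if a + b ≤ m then L a b (m - (a + b)) else 0) := by
    split_ifs with h
    · exact shiftAB a b m ha hb h
    · exact emptyAB a b m h
  have h1 := card_split a b m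
  have h2 := incl_excl a b m
  rw [L_eq_sol]
  omega

private lemma LZ_coe (a b m : ℕ) : LZ a b (m : ℤ) = (L a b m : ℤ) := by
  rw [LZ, if_pos (by positivity)]
  norm_num

private lemma LZ_coe_sub (a b m c : ℕ) :
    LZ a b ((m : ℤ) - c) = if c ≤ m then (L a b (m - c) : ℤ) else 0 := by
  rw [LZ]
  split_ifs with h1 h2 h2
  · congr 2
    omega
  · omega
  · omega
  · rfl

private lemma key_int (a b : ℕ) (ha : 0 < a) (hb : 0 < b) (n : ℤ) (hn : 0 ≤ n) :
    LZ a b n + LZ a b (n - a - b) = LZ a b (n - a) + LZ a b (n - b) + 1 := by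
  obtain ⟨m, rfl⟩ : ∃ m : ℕ, n = (m : ℤ) := ⟨n.toNat, by omega⟩
  have e : (m : ℤ) - a - b = (m : ℤ) - (a + b : ℕ) := by push_cast; ring
  rw [e, LZ_coe, LZ_coe_sub, LZ_coe_sub, LZ_coe_sub]
  have h := key_nat a b m ha hb
  split_ifs with h1 h2 h3 <;> split_ifs at h <;> push_cast <;> omega

theorem stmt_2 (a b : ℕ) (ha : 0 < a) (hb : 0 < b) (n : ℤ) (hn : 0 < n) :
    LZ a b n =
      LZ a b (n - 1) + LZ a b (n - a) + LZ a b (n - b) + LZ a b (n - a - b - 1)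
        - LZ a b (n - a - 1) - LZ a b (n - b - 1) - LZ a b (n - a - b) := by
  have h1 := key_int a b ha hb n (le_of_lt hn)
  have h2 := key_int a b ha hb (n - 1) (by omega)
  have e1 : n - 1 - a = n - a - 1 := by ring
  have e2 : n - 1 - b = n - b - 1 := by ring
  have e3 : n - 1 - a - b = n - a - b - 1 := by ring
  rw [e3] at h2
  rw [e1, e2] at h2
  linarith
end

section
/- Let n ≥ 2 be an integer, d(m) := (m+1)(m+2)/2 for m ≥ 0 and d(-1)=d(-2):=0, and let c(m)=1 if m ≡ 0 (mod n), c(m)=-1 if m ≡ 1 (mod n), c(m)=0 otherwise. Then for every nonnegative integer N, ∑_{k=0}^N c(⌊k/n⌋) d(⌊(N-k)/n⌋) ≥ d(⌊N/n⌋). -/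
/-- `c n m` is `1` if `m ≡ 0 (mod n)`, `-1` if `m ≡ 1 (mod n)`, and `0` otherwise. -/
def c (n m : ℕ) : ℤ :=
  if m % n = 0 then 1 else if m % n = 1 then -1 else 0

/-- The `m`-th triangular number `(m+1)(m+2)/2`. -/
def d (m : ℕ) : ℤ := (m + 1) * (m + 2) / 2

open Finset

lemma two_mul_d (m : ℕ) : 2 * d m = ((m:ℤ) + 1) * ((m:ℤ) + 2) := by
  have h : (2:ℤ) ∣ ((m:ℤ) + 1) * ((m:ℤ) + 2) := by
    have h1 := Int.even_mul_succ_self ((m:ℤ) + 1)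
    have h2 : ((m:ℤ)+1) * ((m:ℤ)+1+1) = ((m:ℤ)+1)*((m:ℤ)+2) := by ring
    rw [h2] at h1
    exact h1.two_dvd
  unfold d
  rw [Int.mul_ediv_cancel' h]

lemma d_succ (m : ℕ) : d (m + 1) = d m + ((m:ℤ) + 2) := by
  have a := two_mul_d m
  have b := two_mul_d (m+1)
  push_cast at a b
  linarith

lemma d_zero : d 0 = 1 := by norm_num [d]

lemma hermite (n : ℕ) (hn : 0 < n) (K : ℕ) :
    ∑ j ∈ range n, (K + j) / n = K := by
  induction K with
  | zero =>
    apply Finset.sum_eq_zero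
    intro j hj
    simp only [mem_range] at hj
    simpa using Nat.div_eq_of_lt hj
  | succ K ih =>
    have e1 := Finset.sum_range_succ' (fun j => (K+j)/n) n
    have e2 := Finset.sum_range_succ (fun j => (K+j)/n) n
    simp only [Nat.add_zero] at e1 e2
    have h2 : (K+n)/n = K/n + 1 := Nat.add_div_right K hn
    have h3 : ∑ j ∈ range n, (K+1+j)/n = ∑ j ∈ range n, (K+(j+1))/n := by
      apply Finset.sum_congr rfl; intro j _; congr 1; omega
    rw [h3]
    rw [ih, h2] at e2
    rw [e2] at e1
    omega

lemma head (n : ℕ) (hn : 2 ≤ n) (N : ℕ) :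
    ∑ k ∈ range (min (N+1) (n*n)), c n (k/n) * d ((N-k)/n) = (N:ℤ) + 1 := by
  have hM : 2*n ≤ n*n := by nlinarith
  rcases le_or_gt (N+1) n with hsm | hbig
  · have hmin : min (N+1) (n*n) = N+1 := min_eq_left (by omega)
    rw [hmin]
    rw [Finset.sum_congr rfl (g := fun _ => (1:ℤ)) (fun k hk => by
      simp only [mem_range] at hk
      have h1 : k / n = 0 := Nat.div_eq_of_lt (by omega)
      have h2 : (N-k)/n = 0 := Nat.div_eq_of_lt (by omega)
      rw [h1, h2, d_zero]
      simp [c])]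
    simp
  · -- n ≤ N
    set f : ℕ → ℤ := fun k => c n (k/n) * d ((N-k)/n) with hf
    obtain ⟨L, hLdef⟩ : ∃ L, L = min (N+1) (n*n) := ⟨_, rfl⟩
    obtain ⟨L2, hL2def⟩ : ∃ L2, L2 = min (N+1) (2*n) := ⟨_, rfl⟩
    have hLa : L ≤ N+1 := by rw [hLdef]; exact min_le_left _ _
    have hLb : L ≤ n*n := by rw [hLdef]; exact min_le_right _ _
    have hL2b : L2 ≤ 2*n := by rw [hL2def]; exact min_le_right _ _
    have hL2c : L2 ≤ N+1 := by rw [hL2def]; exact min_le_left _ _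
    have hL2or : L2 = N+1 ∨ L2 = 2*n := by
      have := min_choice (N+1) (2*n)
      rw [← hL2def] at this
      exact this
    have hnL2 : n ≤ L2 := by rw [hL2def]; exact le_min (by omega) (by omega)
    have hL2L : L2 ≤ L := by
      rw [hLdef, hL2def]
      exact le_min (min_le_left _ _) (le_trans (min_le_right _ _) hM)
    have hnL : n ≤ L := le_trans hnL2 hL2L
    have hLmin : min (N+1) (n*n) = L := hLdef.symm
    clear hLdef hL2def
    have split1 : (∑ k ∈ Ico 0 n, f k) + (∑ k ∈ Ico n L, f k) = ∑ k ∈ Ico 0 L, f k :=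
      Finset.sum_Ico_consecutive f (Nat.zero_le n) hnL
    have split2 : (∑ k ∈ Ico n L2, f k) + (∑ k ∈ Ico L2 L, f k) = ∑ k ∈ Ico n L, f k :=
      Finset.sum_Ico_consecutive f hnL2 hL2L
    have tail0 : ∑ k ∈ Ico L2 L, f k = 0 := by
      apply Finset.sum_eq_zero
      intro k hk
      simp only [mem_Ico] at hk
      have hk2 : 2*n ≤ k := by omega
      have hkn2 : k < n*n := lt_of_lt_of_le hk.2 hLb
      have hdiv1 : 2 ≤ k/n := (Nat.le_div_iff_mul_le (by omega)).2 (by omega)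
      have hdiv2 : k/n < n := (Nat.div_lt_iff_lt_mul (by omega)).2 (by omega)
      have hmod : (k/n) % n = k/n := Nat.mod_eq_of_lt hdiv2
      rw [hf]
      simp only [c, hmod]
      rw [if_neg (by omega), if_neg (by omega), zero_mul]
    have mid : ∑ k ∈ Ico n L2, f k = ∑ b ∈ range (L2 - n), -(d ((N - (n+b))/n)) := by
      rw [Finset.sum_Ico_eq_sum_range]
      apply Finset.sum_congr rfl
      intro b hb
      simp only [mem_range] at hb
      have h1 : (n+b)/n = 1 := Nat.div_eq_of_lt_le (by omega) (by omega)
      have hm1 : 1 % n = 1 := Nat.mod_eq_of_lt (by omega)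
      rw [hf]
      simp only [h1, c, hm1]
      norm_num
    obtain ⟨m, hmdef⟩ : ∃ m, m = L2 - n := ⟨_, rfl⟩
    have hmn : m ≤ n := by omega
    have mid2 : ∑ b ∈ range m, -(d ((N - (n+b))/n))
        = ∑ b ∈ range n, (if b < m then -(d ((N-(n+b))/n)) else 0) := by
      rw [← Finset.sum_subset (Finset.range_subset_range.2 hmn)
          (fun b _ hb => if_neg (by simp only [mem_range, not_lt] at hb; omega))]
      apply Finset.sum_congr rfl
      intro b hb
      simp only [mem_range] at hb
      rw [if_pos hb]
    have first : ∑ k ∈ Ico 0 n, f k = ∑ b ∈ range n, d ((N-b)/n) := by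
      rw [← Finset.range_eq_Ico]
      apply Finset.sum_congr rfl
      intro b hb
      simp only [mem_range] at hb
      have h1 : b/n = 0 := Nat.div_eq_of_lt hb
      rw [hf]
      simp only [h1, c]
      norm_num
    have comb : ∑ k ∈ range L, f k
        = ∑ b ∈ range n, (d ((N-b)/n) + (if b < m then -(d ((N-(n+b))/n)) else 0)) :=
      calc ∑ k ∈ range L, f k = ∑ k ∈ Ico 0 L, f k := by rw [Finset.range_eq_Ico]
        _ = (∑ k ∈ Ico 0 n, f k) + (∑ k ∈ Ico n L, f k) := split1.symm
        _ = (∑ k ∈ Ico 0 n, f k) + ((∑ k ∈ Ico n L2, f k) + (∑ k ∈ Ico L2 L, f k)) := by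
              rw [split2]
        _ = (∑ b ∈ range n, d ((N-b)/n))
              + (∑ b ∈ range n, (if b < m then -(d ((N-(n+b))/n)) else 0)) := by
              rw [tail0, add_zero, mid, ← hmdef, mid2, first]
        _ = _ := Finset.sum_add_distrib.symm
    have per : ∀ b ∈ range n,
        d ((N-b)/n) + (if b < m then -(d ((N-(n+b))/n)) else 0) = (((N-b)/n : ℕ) : ℤ) + 1 := by
      intro b hb
      simp only [mem_range] at hb
      by_cases hbm : b < m
      · have hnbN : n + b ≤ N := by omega
        have hq : 1 ≤ (N-b)/n := (Nat.le_div_iff_mul_le (by omega)).2 (by omega)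
        obtain ⟨p, hp⟩ := Nat.exists_eq_add_of_le hq
        have hp' : (N-b)/n = p + 1 := by omega
        have harg : N - (n+b) = (N-b) - n*1 := by omega
        have hdiv : (N - (n+b))/n = p := by
          rw [harg, Nat.sub_mul_div (N-b) n 1, hp']
          omega
        rw [if_pos hbm, hdiv, hp', d_succ]
        push_cast
        ring
      · have h0 : (N-b)/n = 0 := Nat.div_eq_of_lt (by omega)
        rw [if_neg hbm, h0, d_zero]
        norm_num
    have hre : ∑ b ∈ range n, (((N-b)/n : ℕ) : ℤ) = ((N - n + 1 : ℕ) : ℤ) := by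
      rw [← Nat.cast_sum]
      congr 1
      rw [← Finset.sum_range_reflect (fun b => (N-b)/n) n]
      rw [Finset.sum_congr rfl (g := fun j => ((N-n+1) + j)/n) (fun j hj => by
        simp only [mem_range] at hj
        congr 1
        omega)]
      exact hermite n (by omega) (N-n+1)
    have hgoal : ∑ k ∈ range (min (N+1) (n*n)), c n (k/n) * d ((N-k)/n) = ∑ k ∈ range L, f k := by
      rw [hLmin]
    rw [hgoal, comb, Finset.sum_congr rfl per, Finset.sum_add_distrib, hre]
    simp only [Finset.sum_const, Finset.card_range, nsmul_eq_mul, mul_one]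
    omega

lemma recur (n : ℕ) (hn : 2 ≤ n) (N : ℕ) (h : n*n ≤ N) :
    ∑ k ∈ range (N+1), c n (k/n) * d ((N-k)/n)
      = ((N:ℤ)+1) + ∑ k ∈ range ((N - n*n) + 1), c n (k/n) * d (((N - n*n) - k)/n) := by
  set f : ℕ → ℤ := fun k => c n (k/n) * d ((N-k)/n) with hf
  have hsplit : (∑ k ∈ Ico 0 (n*n), f k) + (∑ k ∈ Ico (n*n) (N+1), f k)
      = ∑ k ∈ Ico 0 (N+1), f k :=
    Finset.sum_Ico_consecutive f (Nat.zero_le _) (by omega)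
  have hhead : ∑ k ∈ Ico 0 (n*n), f k = (N:ℤ) + 1 := by
    have hb := head n hn N
    rw [min_eq_right (by omega)] at hb
    rw [← Finset.range_eq_Ico]
    exact hb
  have htail : ∑ k ∈ Ico (n*n) (N+1), f k
      = ∑ k ∈ range ((N - n*n) + 1), c n (k/n) * d (((N - n*n) - k)/n) := by
    rw [Finset.sum_Ico_eq_sum_range]
    have harg : N + 1 - n*n = (N - n*n) + 1 := by omega
    rw [harg]
    apply Finset.sum_congr rfl
    intro j hj
    simp only [mem_range] at hj
    rw [hf]
    have h1 : (n*n + j)/n = n + j/n := Nat.mul_add_div (by omega) n j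
    have h2 : N - (n*n + j) = (N - n*n) - j := by omega
    simp only [h1, h2, c, Nat.add_mod_left]
  calc ∑ k ∈ range (N+1), f k = ∑ k ∈ Ico 0 (N+1), f k := by rw [Finset.range_eq_Ico]
    _ = (∑ k ∈ Ico 0 (n*n), f k) + (∑ k ∈ Ico (n*n) (N+1), f k) := hsplit.symm
    _ = _ := by rw [hhead, htail]

theorem stmt_7 (n : ℕ) (hn : 2 ≤ n) (N : ℕ) :
    d (N / n) ≤ ∑ k ∈ Finset.range (N + 1), c n (k / n) * d ((N - k) / n) := by
  induction N using Nat.strong_induction_on with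
  | _ N ih =>
  rcases lt_or_ge N (n*n) with h | h
  · have hb := head n hn N
    rw [min_eq_left (by omega)] at hb
    rw [hb]
    have hq1 : N/n < n := (Nat.div_lt_iff_lt_mul (by omega)).2 h
    have hq2 : (N/n) * n ≤ N := Nat.div_mul_le_self N n
    have h2d := two_mul_d (N/n)
    have c1 : ((N/n : ℕ) : ℤ) + 1 ≤ (n:ℤ) := by exact_mod_cast hq1
    have c2 : ((N/n : ℕ) : ℤ) * (n:ℤ) ≤ (N:ℤ) := by exact_mod_cast hq2
    have c3 : (2:ℤ) ≤ (n:ℤ) := by exact_mod_cast hn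
    have hint : (0:ℤ) ≤ ((N/n : ℕ) : ℤ) * (2*(n:ℤ) - ((N/n : ℕ) : ℤ) - 3) :=
      mul_nonneg (by positivity) (by linarith)
    nlinarith [h2d, hint, c2]
  · rw [recur n hn N h]
    have hnn1 : 1 ≤ n*n := by nlinarith
    have ihh := ih (N - n*n) (by omega)
    have hq : n ≤ N/n := (Nat.le_div_iff_mul_le (by omega)).2 h
    have hdivsub : (N - n*n)/n = N/n - n := Nat.sub_mul_div N n n
    rw [hdivsub] at ihh
    obtain ⟨p, hp⟩ := Nat.exists_eq_add_of_le hq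
    have hp2 : N/n - n = p := by omega
    rw [hp2] at ihh
    have key : d (N/n) ≤ (N:ℤ) + 1 + d p := by
      rw [hp]
      have a := two_mul_d (n+p)
      have b := two_mul_d p
      have c2 : ((n:ℤ) + (p:ℤ)) * (n:ℤ) ≤ (N:ℤ) := by
        have := Nat.div_mul_le_self N n
        rw [hp] at this
        exact_mod_cast this
      have c3 : (2:ℤ) ≤ (n:ℤ) := by exact_mod_cast hn
      have hint : (0:ℤ) ≤ ((n:ℤ) - 1) * ((n:ℤ) - 2) :=
        mul_nonneg (by linarith) (by linarith)
      push_cast at a b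
      nlinarith [a, b, c2, hint]
    linarith
end

section
/- Let n ≥ 2 and let N = pn² + qn + r with integers p,q,r ≥ 0, q,r < n. Then (p+1)(N+1) ≥ (pn+q+1)(pn+q+2)/2 + p(p+1)n²/2. -/
theorem stmt_9 (n N p q r : ℕ) (hn : 2 ≤ n) (hq : q < n) (hr : r < n)
    (hN : N = p * n ^ 2 + q * n + r) :
    (p * n + q + 1) * (p * n + q + 2) / 2 + p * (p + 1) * n ^ 2 / 2 ≤ (p + 1) * (N + 1) := by
  have key : (p * n + q + 1) * (p * n + q + 2) + p * (p + 1) * n ^ 2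
      ≤ 2 * ((p + 1) * (N + 1)) := by
    subst hN
    nlinarith [hq, hn, Nat.succ_le_of_lt hq, mul_le_mul_left (Nat.succ_le_of_lt hq) q,
      mul_le_mul_left hn p, mul_le_mul_left (mul_le_mul_left hn p) n]
  omega
end

section
/- Let a,b,c be positive reals with b ≤ 1, b ≤ c, and ab ≤ c. Then for all z ∈ (0,1): (1-z)(1-z^c) ≥ (1-z^a)(1-z^b). -/
/-- Chord-slope inequality for the concave function `x ↦ x ^ b` on `[0,1]`:
for `0 < w ≤ z < 1` and `0 < b ≤ 1`, `(1 - z^b)(1 - w) ≤ (1 - z)(1 - w^b)`. -/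
lemma slope_rpow_aux (b w z : ℝ) (hb : 0 < b) (hb1 : b ≤ 1)
    (hw : 0 < w) (hwz : w ≤ z) (hz1 : z < 1) :
    (1 - z ^ b) * (1 - w) ≤ (1 - z) * (1 - w ^ b) := by
  have hw1 : w < 1 := lt_of_le_of_lt hwz hz1
  have hden : (0:ℝ) < 1 - w := by linarith
  set t : ℝ := (1 - z) / (1 - w) with ht
  set s : ℝ := (z - w) / (1 - w) with hs
  have htnn : 0 ≤ t := div_nonneg (by linarith) hden.le
  have hsnn : 0 ≤ s := div_nonneg (by linarith) hden.le
  have hts : t + s = 1 := by rw [ht, hs, ← add_div, div_eq_one_iff_eq hden.ne']; ring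
  have hcomb : t * w + s * 1 = z := by rw [ht, hs, div_mul_eq_mul_div, mul_one, ← add_div, div_eq_iff hden.ne']; ring
  have hconc := (Real.concaveOn_rpow hb.le hb1).2 (Set.mem_Ici.2 hw.le)
    (Set.mem_Ici.2 (by norm_num : (0:ℝ) ≤ 1)) htnn hsnn hts
  simp only [smul_eq_mul] at hconc
  rw [hcomb, Real.one_rpow] at hconc
  -- hconc : t * w ^ b + s * 1 ≤ z ^ b
  have key : 1 - z ^ b ≤ t * (1 - w ^ b) := by nlinarith [hconc, hts]
  calc (1 - z ^ b) * (1 - w) ≤ t * (1 - w ^ b) * (1 - w) := by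
        have hwb1 : w ^ b ≤ 1 := Real.rpow_le_one hw.le hw1.le hb.le
        nlinarith [key]
    _ = (1 - z) * (1 - w ^ b) := by rw [ht, div_mul_eq_mul_div, div_mul_cancel₀ _ hden.ne']

theorem stmt_14 (a b c : ℝ) (ha : 0 < a) (hb : 0 < b) (hc : 0 < c)
    (hb1 : b ≤ 1) (hbc : b ≤ c) (habc : a * b ≤ c) :
    ∀ z ∈ Set.Ioo (0 : ℝ) 1,
      (1 - z ^ a) * (1 - z ^ b) ≤ (1 - z) * (1 - z ^ c) := by
  rintro z ⟨hz0, hz1⟩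
  have hzb1 : z ^ b ≤ 1 := Real.rpow_le_one hz0.le hz1.le hb.le
  have hza0 : 0 < z ^ a := Real.rpow_pos_of_pos hz0 a
  have hzb0 : 0 < z ^ b := Real.rpow_pos_of_pos hz0 b
  have hzc0 : 0 < z ^ c := Real.rpow_pos_of_pos hz0 c
  rcases le_or_gt a 1 with hA | hA
  · -- easy case: z ≤ z^a and z^c ≤ z^b
    have h1 : z ≤ z ^ a := by
      nth_rewrite 1 [← Real.rpow_one z]
      exact Real.rpow_le_rpow_of_exponent_ge hz0 hz1.le hA
    have h2 : z ^ c ≤ z ^ b := Real.rpow_le_rpow_of_exponent_ge hz0 hz1.le hbc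
    have hza1 : z ^ a ≤ 1 := Real.rpow_le_one hz0.le hz1.le ha.le
    nlinarith
  · -- a ≥ 1 : reduce to c = a*b via z^c ≤ z^(a*b), then use slope lemma
    have h2 : z ^ c ≤ z ^ (a * b) := Real.rpow_le_rpow_of_exponent_ge hz0 hz1.le habc
    have hzab : z ^ (a * b) = (z ^ a) ^ b := Real.rpow_mul hz0.le a b
    have hwz : z ^ a ≤ z := by
      nth_rewrite 2 [← Real.rpow_one z]
      exact Real.rpow_le_rpow_of_exponent_ge hz0 hz1.le hA.le
    have key := slope_rpow_aux b (z ^ a) z hb hb1 hza0 hwz hz1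
    have hzab1 : z ^ (a*b) ≤ 1 := Real.rpow_le_one hz0.le hz1.le (by positivity)
    nlinarith [key, h2, hzab]
end

section
/- Let a,b be positive reals with b ≤ 1 ≤ a. Then for all z ∈ (0,1): (1-z)(1-z^{ab}) ≥ (1-z^a)(1-z^b). -/
open Real Set

lemma bern_aux {a w : ℝ} (ha : 1 ≤ a) (hw : 0 < w) (hw1 : w ≤ 1) :
    a * w ^ (a - 1) * (1 - w) ≤ 1 - w ^ a := by
  have hs : (-1 : ℝ) ≤ w⁻¹ - 1 := by
    have : (0:ℝ) < w⁻¹ := inv_pos.2 hw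
    linarith
  have h1 : 1 + a * (w⁻¹ - 1) ≤ (w⁻¹) ^ a := by
    have := one_add_mul_self_le_rpow_one_add hs ha
    simpa using this
  have hwa : 0 < w ^ a := Real.rpow_pos_of_pos hw a
  have hinv : (w⁻¹) ^ a = (w ^ a)⁻¹ := Real.inv_rpow hw.le a
  have h2 : (1 + a * (w⁻¹ - 1)) * w ^ a ≤ 1 := by
    have := mul_le_mul_of_nonneg_right h1 hwa.le
    rwa [hinv, inv_mul_cancel₀ hwa.ne'] at this
  have hsub : w ^ (a - 1) = w ^ a / w := Real.rpow_sub_one hw.ne' a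
  have hmul : w ^ (a - 1) * w = w ^ a := by
    rw [hsub]
    field_simp
  have hinvmul : w⁻¹ * w ^ a = w ^ (a - 1) := by
    rw [hsub]; field_simp
  nlinarith [h2, hmul, hinvmul]

lemma key_lemma {a t w : ℝ} (ha : 1 ≤ a) (ht : 0 < t) (htw : t ≤ w) (hw1 : w < 1) :
    (1 - t ^ a) * (1 - w) ≤ (1 - w ^ a) * (1 - t) := by
  set f : ℝ → ℝ := fun s => (1 - w ^ a) * (s - 1) + (1 - w) * (1 - s ^ a) with hf
  have hderiv : ∀ s ∈ Ioo t w, HasDerivAt f ((1 - w ^ a) - (1 - w) * (a * s ^ (a - 1))) s := by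
    intro s hs
    have hs0 : (0:ℝ) < s := lt_trans ht hs.1
    have h1 : HasDerivAt (fun s : ℝ => s ^ a) (a * s ^ (a - 1)) s := by
      have := Real.hasDerivAt_rpow_const (x := s) (p := a) (Or.inl hs0.ne')
      simpa [mul_comm] using this
    have h2 : HasDerivAt (fun s : ℝ => (1 - w ^ a) * (s - 1)) (1 - w ^ a) s := by
      simpa using ((hasDerivAt_id s).sub_const 1).const_mul (1 - w ^ a)
    have h3 : HasDerivAt (fun s : ℝ => (1 - w) * (1 - s ^ a)) (-((1 - w) * (a * s ^ (a - 1)))) s := by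
      have := ((hasDerivAt_const s (1:ℝ)).sub h1).const_mul (1 - w)
      simpa [mul_comm] using this
    have := h2.add h3
    exact this.congr_deriv (by ring)
  have hcont : ContinuousOn f (Icc t w) := by
    have h1 : ContinuousOn (fun s : ℝ => s ^ a) (Icc t w) := by
      intro x hx
      exact (Real.continuousAt_rpow_const x a (Or.inl (lt_of_lt_of_le ht hx.1).ne')).continuousWithinAt
    exact (continuousOn_const.mul (continuousOn_id.sub continuousOn_const)).add
      (continuousOn_const.mul (continuousOn_const.sub h1))
  have hmono : MonotoneOn f (Icc t w) := by
    apply monotoneOn_of_deriv_nonneg (convex_Icc t w) hcont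
    · intro s hs
      rw [interior_Icc] at hs
      exact (hderiv s hs).differentiableAt.differentiableWithinAt
    · intro s hs
      rw [interior_Icc] at hs
      rw [(hderiv s hs).deriv]
      have hs0 : (0:ℝ) < s := lt_trans ht hs.1
      have hsw : s ^ (a - 1) ≤ w ^ (a - 1) :=
        Real.rpow_le_rpow hs0.le hs.2.le (by linarith)
      have hw0 : (0 : ℝ) < w := lt_trans hs0 hs.2
      have hb := bern_aux ha hw0 hw1.le
      have h1w : (0:ℝ) ≤ 1 - w := by linarith
      nlinarith [mul_le_mul_of_nonneg_left hsw (mul_nonneg (by linarith : (0:ℝ) ≤ a) h1w)]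
  have h := hmono (left_mem_Icc.2 htw) (right_mem_Icc.2 htw) htw
  have hfw : f w = 0 := by simp [hf]; ring
  rw [hfw] at h
  simp only [hf] at h
  nlinarith [h]

theorem stmt_15 (a b : ℝ) (hb : 0 < b) (hb1 : b ≤ 1) (ha : 1 ≤ a) :
    ∀ z ∈ Set.Ioo (0 : ℝ) 1,
      (1 - z ^ a) * (1 - z ^ b) ≤ (1 - z) * (1 - z ^ (a * b)) := by
  intro z hz
  obtain ⟨hz0, hz1⟩ := hz
  have hw1 : z ^ b < 1 := Real.rpow_lt_one hz0.le hz1 hb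
  have htw : z ≤ z ^ b := by
    have := Real.rpow_le_rpow_of_exponent_ge hz0 hz1.le hb1
    simpa using this
  have hkey := key_lemma ha hz0 htw hw1
  have hab : (z ^ b) ^ a = z ^ (a * b) := by
    rw [← Real.rpow_mul hz0.le, mul_comm]
  rw [hab] at hkey
  linarith
end

section
/- Let b ≤ 1 ≤ a be positive reals and fix z ∈ (0,1). Then the function F(a) := z^{ab+1} + z^a + z^b - z^{ab} - z^{a+b} - z is nonnegative for all a ≥ 1, with F(1) = 0. -/
theorem stmt_16 (b z : ℝ) (hb : 0 < b) (hb1 : b ≤ 1) (hz : z ∈ Set.Ioo (0 : ℝ) 1) :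
    (∀ a : ℝ, 1 ≤ a →
      0 ≤ z ^ (a * b + 1) + z ^ a + z ^ b - z ^ (a * b) - z ^ (a + b) - z) ∧
    z ^ (1 * b + 1) + z ^ (1 : ℝ) + z ^ b - z ^ (1 * b) - z ^ (1 + b) - z = 0 := by
  obtain ⟨hz0, hz1⟩ := hz
  constructor
  · intro a ha
    set u := z ^ b with hu
    have hu_pos : 0 < u := Real.rpow_pos_of_pos hz0 b
    have huz : z ≤ u := by
      calc z = z ^ (1 : ℝ) := (Real.rpow_one z).symm
        _ ≤ z ^ b := Real.rpow_le_rpow_of_exponent_ge hz0 hz1.le hb1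
    have hu1 : u ≤ 1 := Real.rpow_le_one hz0.le hz1.le hb.le
    have hden : 0 < 1 - z := by linarith
    -- weights
    set l : ℝ := (u - z) / (1 - z) with hl
    set m : ℝ := (1 - u) / (1 - z) with hm
    have hl0 : 0 ≤ l := div_nonneg (by linarith) hden.le
    have hm0 : 0 ≤ m := div_nonneg (by linarith) hden.le
    have hlm : l + m = 1 := by
      rw [hl, hm, ← add_div, div_eq_one_iff_eq hden.ne']; ring
    have hcomb : l • (1 : ℝ) + m • z = u := by
      simp only [smul_eq_mul, hl, hm]
      field_simp
      ring
    have hconv := (convexOn_rpow (p := a) ha).2 (by simp : (1 : ℝ) ∈ Set.Ici (0 : ℝ))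
      (Set.mem_Ici.mpr hz0.le) hl0 hm0 hlm
    rw [hcomb] at hconv
    simp only [smul_eq_mul, Real.one_rpow, mul_one] at hconv
    -- hconv : u ^ a ≤ l + m * z ^ a
    have key : u ^ a * (1 - z) ≤ (u - z) + (1 - u) * z ^ a := by
      have := mul_le_mul_of_nonneg_right hconv hden.le
      calc u ^ a * (1 - z) ≤ (l + m * z ^ a) * (1 - z) := this
        _ = (u - z) + (1 - u) * z ^ a := by
            simp only [hl, hm]; field_simp
    have e1' : z ^ (a * b) = u ^ a := by
      rw [hu, ← Real.rpow_mul hz0.le, mul_comm a b]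
    have e2 : z ^ (a * b + 1) = u ^ a * z := by
      rw [Real.rpow_add hz0, e1', Real.rpow_one]
    have e3 : z ^ (a + b) = z ^ a * u := by
      rw [Real.rpow_add hz0, hu]
    rw [e1', e2, e3]
    nlinarith [key]
  · have h1 : z ^ (1 * b + 1) = z ^ b * z := by
      rw [one_mul, Real.rpow_add hz0, Real.rpow_one]
    have h2 : z ^ (1 * b) = z ^ b := by rw [one_mul]
    have h3 : z ^ (1 + b) = z * z ^ b := by
      rw [Real.rpow_add hz0, Real.rpow_one]
    rw [h1, h2, h3, Real.rpow_one]
    ring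
end

section
/- Let a ≥ 1, 0 < b ≤ 1 be reals, z ∈ (0,1), and suppose ab ≤ a + b and a ≤ ab + 1. Then (b/(b+1))·z^{ab+1} + (1/(b+1))·z^a ≤ (b/(b+1))·z^{ab} + (1/(b+1))·z^{a+b}. -/
lemma aux_rpow_convex (z : ℝ) (hz : 0 < z) (p q l m : ℝ) (hl : 0 ≤ l) (hm : 0 ≤ m)
    (hlm : l + m = 1) : z ^ (l * p + m * q) ≤ l * z ^ p + m * z ^ q := by
  rw [Real.rpow_def_of_pos hz, Real.rpow_def_of_pos hz, Real.rpow_def_of_pos hz]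
  have h := convexOn_exp.2 (Set.mem_univ (Real.log z * p)) (Set.mem_univ (Real.log z * q)) hl hm hlm
  simp only [smul_eq_mul] at h
  calc Real.exp (Real.log z * (l * p + m * q))
      = Real.exp (l * (Real.log z * p) + m * (Real.log z * q)) := by ring_nf
    _ ≤ l * Real.exp (Real.log z * p) + m * Real.exp (Real.log z * q) := h

theorem stmt_17 (a b z : ℝ) (ha : 1 ≤ a) (hb : 0 < b) (hb1 : b ≤ 1)
    (hz : z ∈ Set.Ioo (0 : ℝ) 1) (h1 : a * b ≤ a + b) (h2 : a ≤ a * b + 1) :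
    (b / (b + 1)) * z ^ (a * b + 1) + (1 / (b + 1)) * z ^ a ≤
      (b / (b + 1)) * z ^ (a * b) + (1 / (b + 1)) * z ^ (a + b) := by
  obtain ⟨hz0, hz1⟩ := hz
  set t : ℝ := a + b - a * b with ht_def
  have ht1 : 1 ≤ t := by nlinarith
  have ht0 : 0 < t := by linarith
  have hbt : b ≤ t := by nlinarith
  have h3 : z ^ (a * b + 1) ≤ ((t - 1) / t) * z ^ (a * b) + (1 / t) * z ^ (a + b) := by
    have := aux_rpow_convex z hz0 (a * b) (a + b) ((t - 1) / t) (1 / t)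
      (div_nonneg (by linarith) ht0.le) (by positivity) (by field_simp; ring)
    have heq : (t - 1) / t * (a * b) + 1 / t * (a + b) = a * b + 1 := by
      field_simp; ring
    rwa [heq] at this
  have h4 : z ^ a ≤ (b / t) * z ^ (a * b) + ((t - b) / t) * z ^ (a + b) := by
    have := aux_rpow_convex z hz0 (a * b) (a + b) (b / t) ((t - b) / t)
      (by positivity) (div_nonneg (by linarith) ht0.le) (by field_simp; ring)
    have heq : b / t * (a * b) + (t - b) / t * (a + b) = a := by
      field_simp; ring
    rwa [heq] at this
  have hb1' : (0:ℝ) < b + 1 := by linarith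
  have key : b * z ^ (a * b + 1) + z ^ a ≤ b * z ^ (a * b) + z ^ (a + b) := by
    have hsum := add_le_add (mul_le_mul_of_nonneg_left h3 hb.le) h4
    have heq : b * ((t - 1) / t * z ^ (a * b) + 1 / t * z ^ (a + b)) +
        (b / t * z ^ (a * b) + (t - b) / t * z ^ (a + b)) = b * z ^ (a * b) + z ^ (a + b) := by
      field_simp; ring
    linarith
  calc (b / (b + 1)) * z ^ (a * b + 1) + (1 / (b + 1)) * z ^ a
      = (b * z ^ (a * b + 1) + z ^ a) / (b + 1) := by ring
    _ ≤ (b * z ^ (a * b) + z ^ (a + b)) / (b + 1) := by gcongr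
    _ = (b / (b + 1)) * z ^ (a * b) + (1 / (b + 1)) * z ^ (a + b) := by ring
end

section
/- Let a,b,c be positive reals with b ≤ 1, b ≤ c and c < ab. Then there exists z ∈ (0,1) with (1-z)(1-z^c) < (1-z^a)(1-z^b). -/
open Filter Set Topology

lemma slope_tendsto (x : ℝ) :
    Tendsto (fun z : ℝ => (1 - z ^ x) / (1 - z)) (𝓝[Set.Ioo (0:ℝ) 1] 1) (𝓝 x) := by
  have h : HasDerivAt (fun z : ℝ => z ^ x) (x * (1:ℝ) ^ (x - 1)) 1 :=
    Real.hasDerivAt_rpow_const (Or.inl one_ne_zero)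
  rw [Real.one_rpow, mul_one] at h
  have h2 := hasDerivAt_iff_tendsto_slope.mp h
  have h3 : Tendsto (slope (fun z : ℝ => z ^ x) 1) (𝓝[Set.Ioo (0:ℝ) 1] 1) (𝓝 x) :=
    h2.mono_left (nhdsWithin_mono _ (fun z hz => ne_of_lt hz.2))
  refine h3.congr' ?_
  filter_upwards [self_mem_nhdsWithin] with z hz
  have hz1 : z ≠ 1 := ne_of_lt hz.2
  rw [slope_def_field, Real.one_rpow]
  rw [div_eq_div_iff (sub_ne_zero.mpr hz1) (sub_ne_zero.mpr (fun h => hz1 h.symm))]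
  ring

theorem stmt_18 (a b c : ℝ) (ha : 0 < a) (hb : 0 < b) (hc : 0 < c)
    (hb1 : b ≤ 1) (hbc : b ≤ c) (hcab : c < a * b) :
    ∃ z ∈ Set.Ioo (0 : ℝ) 1,
      (1 - z) * (1 - z ^ c) < (1 - z ^ a) * (1 - z ^ b) := by
  haveI : (𝓝[Set.Ioo (0:ℝ) 1] 1).NeBot := right_nhdsWithin_Ioo_neBot one_pos
  have hprod : Tendsto (fun z : ℝ => ((1 - z ^ a) / (1 - z)) * ((1 - z ^ b) / (1 - z)))
      (𝓝[Set.Ioo (0:ℝ) 1] 1) (𝓝 (a * b)) := (slope_tendsto a).mul (slope_tendsto b)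
  have hev : ∀ᶠ z in 𝓝[Set.Ioo (0:ℝ) 1] 1,
      (1 - z ^ c) / (1 - z) < ((1 - z ^ a) / (1 - z)) * ((1 - z ^ b) / (1 - z)) :=
    (slope_tendsto c).eventually_lt hprod hcab
  have := (hev.and self_mem_nhdsWithin).exists
  obtain ⟨z, hlt, hz⟩ := this
  refine ⟨z, hz, ?_⟩
  have h1z : 0 < 1 - z := by linarith [hz.2]
  have := mul_lt_mul_of_pos_left hlt (mul_pos h1z h1z)
  calc (1 - z) * (1 - z ^ c) = (1 - z) * (1 - z) * ((1 - z ^ c) / (1 - z)) := by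
        field_simp; try ring
    _ < (1 - z) * (1 - z) * (((1 - z ^ a) / (1 - z)) * ((1 - z ^ b) / (1 - z))) := this
    _ = (1 - z ^ a) * (1 - z ^ b) := by field_simp; try ring
end
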